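/- arXiv:2108.06727 — 2 statements merged into one kernel-verified Lean document; each statement's English description precedes it below -/
import Mathlib

section
/- Let M be a model of T⁰_ceq (i.e., a structure with unary predicates P, Q partitioning the universe, a binary relation E that is an equivalence relation on Q, and a binary function F : Q × P → Q such that F(a,c) is E-equivalent to a and F(a,c) = F(b,c) whenever a E b). If A is a finite subset of M with n elements, then the closure of A under the function F has at most n + n² elements. -/
/-!
By (α) and (β), `F (F a b) c = F a c` whenever `a ∈ Q` and `b, c ∈ P`; and every value of `F`
lies in `Q`, hence outside `P`. So `A ∪ F(A ∩ Q, A ∩ P)` is already closed under `F`, and it has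
at most `n + |A ∩ Q| · |A ∩ P| ≤ n + n²` elements.
-/

open Set

theorem Set.ncard_image2_le {α β γ : Type*} (f : α → β → γ) {s : Set α} {t : Set β}
    (hs : s.Finite) (ht : t.Finite) : (image2 f s t).ncard ≤ s.ncard * t.ncard := by
  rw [← image_uncurry_prod, ← ncard_prod]
  exact ncard_image_le (hs.prod ht)

theorem Set.ncard_union_image2_inter_le {α : Type*} (f : α → α → α) {A : Set α} (s t : Set α)
    (hA : A.Finite) : (A ∪ image2 f (A ∩ s) (A ∩ t)).ncard ≤ A.ncard + A.ncard ^ 2 :=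
  calc (A ∪ image2 f (A ∩ s) (A ∩ t)).ncard
      ≤ A.ncard + (A ∩ s).ncard * (A ∩ t).ncard :=
        (ncard_union_le _ _).trans <| Nat.add_le_add_left
          (ncard_image2_le f (hA.inter_of_left s) (hA.inter_of_left t)) _
    _ ≤ A.ncard + A.ncard ^ 2 := by
        rw [sq]
        exact Nat.add_le_add_left (Nat.mul_le_mul (ncard_inter_le_ncard_left _ _ hA)
          (ncard_inter_le_ncard_left _ _ hA)) _

namespace CeqModel

variable {M : Type*} {P Q : Set M} {E : M → M → Prop} {F : M → M → M}

def IsClosedUnder (P Q : Set M) (F : M → M → M) (B : Set M) : Prop :=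
  ∀ a ∈ B, ∀ c ∈ B, a ∈ Q → c ∈ P → F a c ∈ B

def fClosure (P Q : Set M) (F : M → M → M) (A : Set M) : Set M :=
  ⋂₀ {B | A ⊆ B ∧ IsClosedUnder P Q F B}

theorem fClosure_subset {A B : Set M} (hAB : A ⊆ B) (hB : IsClosedUnder P Q F B) :
    fClosure P Q F A ⊆ B :=
  sInter_subset_of_mem ⟨hAB, hB⟩

theorem apply_apply_eq (hFα : ∀ a ∈ Q, ∀ c ∈ P, E (F a c) a)
    (hFβ : ∀ a b, E a b → ∀ c ∈ P, F a c = F b c) {a b c : M} (ha : a ∈ Q) (hb : b ∈ P)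
    (hc : c ∈ P) : F (F a b) c = F a c :=
  hFβ _ _ (hFα a ha b hb) c hc

theorem isClosedUnder_union_image2 (hdisj : Disjoint P Q) (hFQ : ∀ a ∈ Q, ∀ c ∈ P, F a c ∈ Q)
    (hFF : ∀ a ∈ Q, ∀ b ∈ P, ∀ c ∈ P, F (F a b) c = F a c) (A : Set M) :
    IsClosedUnder P Q F (A ∪ image2 F (A ∩ Q) (A ∩ P)) := by
  rintro a ha c hc haQ hcP
  have hcA : c ∈ A := by
    rcases hc with hc | ⟨x, hx, y, hy, rfl⟩
    · exact hc
    · exact absurd (hFQ x hx.2 y hy.2) (hdisj.notMem_of_mem_left hcP)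
  rcases ha with ha | ⟨x, hx, y, hy, rfl⟩
  · exact Or.inr ⟨a, ⟨ha, haQ⟩, c, ⟨hcA, hcP⟩, rfl⟩
  · rw [hFF x hx.2 y hy.2 c hcP]
    exact Or.inr ⟨x, hx, c, ⟨hcA, hcP⟩, rfl⟩

end CeqModel

theorem stmt0_general {M : Type*} (P Q : Set M) (E : M → M → Prop) (F : M → M → M)
    (hdisj : Disjoint P Q)
    (hFQ : ∀ a ∈ Q, ∀ c ∈ P, F a c ∈ Q)
    (hFα : ∀ a ∈ Q, ∀ c ∈ P, E (F a c) a)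
    (hFβ : ∀ a b, E a b → ∀ c ∈ P, F a c = F b c)
    (A : Set M) (n : ℕ) (hA : A.Finite) (hn : A.ncard = n) :
    (⋂₀ {B : Set M | A ⊆ B ∧ ∀ a ∈ B, ∀ c ∈ B, a ∈ Q → c ∈ P → F a c ∈ B}).Finite ∧
    (⋂₀ {B : Set M | A ⊆ B ∧ ∀ a ∈ B, ∀ c ∈ B, a ∈ Q → c ∈ P → F a c ∈ B}).ncard
      ≤ n + n ^ 2 := by
  change (CeqModel.fClosure P Q F A).Finite ∧ (CeqModel.fClosure P Q F A).ncard ≤ n + n ^ 2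
  have hsub : CeqModel.fClosure P Q F A ⊆ A ∪ image2 F (A ∩ Q) (A ∩ P) :=
    CeqModel.fClosure_subset subset_union_left <| CeqModel.isClosedUnder_union_image2 hdisj hFQ
      (fun _ ha _ hb _ hc => CeqModel.apply_apply_eq hFα hFβ ha hb hc) A
  have hfin : (A ∪ image2 F (A ∩ Q) (A ∩ P)).Finite :=
    hA.union ((hA.inter_of_left Q).image2 F (hA.inter_of_left P))
  refine ⟨hfin.subset hsub, ?_⟩
  calc (CeqModel.fClosure P Q F A).ncard ≤ (A ∪ image2 F (A ∩ Q) (A ∩ P)).ncard :=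
        ncard_le_ncard hsub hfin
    _ ≤ n + n ^ 2 := hn ▸ ncard_union_image2_inter_le F Q P hA

/-- In a model of T⁰_ceq, the closure of a finite set `A` with `n`
elements under the (partial) function `F` has at most `n + n²` elements. -/
theorem stmt0 {M : Type*} (P Q : Set M) (E : M → M → Prop) (F : M → M → M)
    (hPQ : P ∪ Q = Set.univ) (hdisj : Disjoint P Q)
    (hrefl : ∀ a ∈ Q, E a a) (hsymm : ∀ a b, E a b → E b a)
    (htrans : ∀ a b c, E a b → E b c → E a c)
    (hEQ : ∀ a b, E a b → a ∈ Q ∧ b ∈ Q)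
    (hFQ : ∀ a ∈ Q, ∀ c ∈ P, F a c ∈ Q)
    (hFα : ∀ a ∈ Q, ∀ c ∈ P, E (F a c) a)
    (hFβ : ∀ a b, E a b → ∀ c ∈ P, F a c = F b c)
    (A : Set M) (n : ℕ) (hA : A.Finite) (hn : A.ncard = n) :
    (⋂₀ {B : Set M | A ⊆ B ∧ ∀ a ∈ B, ∀ c ∈ B, a ∈ Q → c ∈ P → F a c ∈ B}).Finite ∧
    (⋂₀ {B : Set M | A ⊆ B ∧ ∀ a ∈ B, ∀ c ∈ B, a ∈ Q → c ∈ P → F a c ∈ B}).ncard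
      ≤ n + n ^ 2 :=
  stmt0_general P Q E F hdisj hFQ hFα hFβ A n hA hn
end

section
/- Let θ be a regular cardinal, λ a cardinal, and suppose M, N are models of T⁰_ceq with universe λ, f an embedding of M into N, and E* = {δ < λ : δ is a limit ordinal and both δ is closed under f and f⁻¹, and δ is closed under the functions of M and N}. If θ ∈ E* is regular, E ⊆ E* ∩ θ is a club of θ, and a ∈ Pᴹ, then the function g_{M,E,a} is pointwise ≤ g_{N,E,f(a)}, where for a model M, club E of θ, and a ∈ Pᴹ, g_{M,E,a}(α) is defined as the minimal β ∈ E with β > α such that for all β₁ ∈ Qᴹ ∩ β, if Fᴹ(β₁,a) < θ then Fᴹ(β₁,a) < β. -/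
open Set

/-- The condition on `β` in the definition of `g_{M,E,a}`. -/
def SelectorBounded (Q : Set Ordinal) (F : Ordinal → Ordinal → Ordinal) (a θ β : Ordinal) :
    Prop :=
  ∀ β₁ ∈ Q, β₁ < β → F β₁ a < θ → F β₁ a < β

/-- `f (F^M β₁ a) = F^N (f β₁) (f a)` lies below `θ`, hence below `δ`, hence so does `F^M β₁ a`. -/
theorem SelectorBounded.of_embedding {lam θ δ a : Ordinal} {QM QN : Set Ordinal}
    {FM FN : Ordinal → Ordinal → Ordinal} {f : Ordinal → Ordinal}
    (hFM : ∀ x ∈ QM, FM x a < lam) (hfQ : ∀ x ∈ QM, f x ∈ QN)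
    (hfF : ∀ x ∈ QM, f (FM x a) = FN (f x) (f a))
    (hθ : ∀ β < θ, f β < θ) (hδ : ∀ β < δ, f β < δ) (hδinv : ∀ β < lam, f β < δ → β < δ)
    (h : SelectorBounded QN FN (f a) θ δ) : SelectorBounded QM FM a θ δ := by
  intro β₁ hβ₁ hβ₁δ hFθ
  have hfFθ : FN (f β₁) (f a) < θ := hfF β₁ hβ₁ ▸ hθ _ hFθ
  exact hδinv _ (hFM β₁ hβ₁) (hfF β₁ hβ₁ ▸ h _ (hfQ β₁ hβ₁) (hδ β₁ hβ₁δ) hfFθ)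

theorem stmt4_general (θ : Cardinal) (lam : Ordinal)
    (PM QM : Set Ordinal) (FM : Ordinal → Ordinal → Ordinal)
    (PN QN : Set Ordinal) (FN : Ordinal → Ordinal → Ordinal)
    -- `M` is a model of T⁰_ceq with universe `λ`
    (hPQM : PM ∪ QM = Set.Iio lam)
    (hFQM : ∀ a ∈ QM, ∀ c ∈ PM, FM a c ∈ QM)
    -- `f` is an embedding of `M` into `N`
    (f : Ordinal → Ordinal)
    (hfQ : ∀ x < lam, (x ∈ QM ↔ f x ∈ QN))
    (hfF : ∀ x ∈ QM, ∀ y ∈ PM, f (FM x y) = FN (f x) (f y))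
    -- the club `E*` of `λ`
    (Estar : Set Ordinal)
    (hEstar : Estar = {δ | δ < lam ∧ Order.IsSuccLimit δ ∧
      (∀ β < δ, f β < δ) ∧ (∀ β < lam, f β < δ → β < δ) ∧
      (∀ x < δ, ∀ y < δ, x ∈ QM → y ∈ PM → FM x y < δ) ∧
      (∀ x < δ, ∀ y < δ, x ∈ QN → y ∈ PN → FN x y < δ)})
    (hθE : θ.ord ∈ Estar)
    -- `C ⊆ E* ∩ θ` is a club of `θ`
    (C : Set Ordinal) (hCE : C ⊆ Estar ∩ Set.Iio θ.ord)
    (a : Ordinal) (ha : a ∈ PM) :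
    ∀ α < θ.ord, ∀ b₁ b₂ : Ordinal,
      IsLeast {β | β ∈ C ∧ α < β ∧
        ∀ β₁ ∈ QM, β₁ < β → FM β₁ a < θ.ord → FM β₁ a < β} b₁ →
      IsLeast {β | β ∈ C ∧ α < β ∧
        ∀ β₁ ∈ QN, β₁ < β → FN β₁ (f a) < θ.ord → FN β₁ (f a) < β} b₂ →
      b₁ ≤ b₂ := by
  intro α _ b₁ b₂ hb₁ ⟨⟨hb₂C, hαb₂, hb₂⟩, _⟩
  subst hEstar
  have hQM : QM ⊆ Iio lam := hPQM ▸ subset_union_right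
  obtain ⟨-, -, hθf, -⟩ := hθE
  obtain ⟨⟨-, -, hb₂f, hb₂finv, -⟩, -⟩ := hCE hb₂C
  refine hb₁.2 ⟨hb₂C, hαb₂, SelectorBounded.of_embedding (lam := lam) (f := f) ?_ ?_ ?_ hθf hb₂f
    hb₂finv hb₂⟩
  · exact fun x hx ↦ hQM (hFQM x hx a ha)
  · exact fun x hx ↦ (hfQ x (hQM hx)).1 hx
  · exact fun x hx ↦ hfF x hx a ha

/-- if `f` embeds the T⁰_ceq-model `M` into `N` (both with universe
the ordinal `λ`), `E*` is the club of `δ < λ` that are limit, closed under `f`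
and `f⁻¹`, and closed under the functions of `M` and `N`, `θ ∈ E*` is a regular
cardinal, `C ⊆ E* ∩ θ` is a club of `θ`, and `a ∈ Pᴹ`, then pointwise
`g_{M,C,a} ≤ g_{N,C,f(a)}` (expressed via the defining least elements). -/
theorem stmt4 (θ : Cardinal) (hθ : θ.IsRegular) (lam : Ordinal)
    (PM QM : Set Ordinal) (EM : Ordinal → Ordinal → Prop) (FM : Ordinal → Ordinal → Ordinal)
    (PN QN : Set Ordinal) (EN : Ordinal → Ordinal → Prop) (FN : Ordinal → Ordinal → Ordinal)
    -- `M` is a model of T⁰_ceq with universe `λ`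
    (hPQM : PM ∪ QM = Set.Iio lam) (hdisjM : Disjoint PM QM)
    (hreflM : ∀ a ∈ QM, EM a a) (hsymmM : ∀ a b, EM a b → EM b a)
    (htransM : ∀ a b c, EM a b → EM b c → EM a c)
    (hEQM : ∀ a b, EM a b → a ∈ QM ∧ b ∈ QM)
    (hFQM : ∀ a ∈ QM, ∀ c ∈ PM, FM a c ∈ QM)
    (hFaM : ∀ a ∈ QM, ∀ c ∈ PM, EM (FM a c) a)
    (hFbM : ∀ a b, EM a b → ∀ c ∈ PM, FM a c = FM b c)
    -- `N` is a model of T⁰_ceq with universe `λ`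
    (hPQN : PN ∪ QN = Set.Iio lam) (hdisjN : Disjoint PN QN)
    (hreflN : ∀ a ∈ QN, EN a a) (hsymmN : ∀ a b, EN a b → EN b a)
    (htransN : ∀ a b c, EN a b → EN b c → EN a c)
    (hEQN : ∀ a b, EN a b → a ∈ QN ∧ b ∈ QN)
    (hFQN : ∀ a ∈ QN, ∀ c ∈ PN, FN a c ∈ QN)
    (hFaN : ∀ a ∈ QN, ∀ c ∈ PN, EN (FN a c) a)
    (hFbN : ∀ a b, EN a b → ∀ c ∈ PN, FN a c = FN b c)
    -- `f` is an embedding of `M` into `N`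
    (f : Ordinal → Ordinal)
    (hfmap : ∀ x < lam, f x < lam)
    (hfinj : ∀ x < lam, ∀ y < lam, f x = f y → x = y)
    (hfP : ∀ x < lam, (x ∈ PM ↔ f x ∈ PN)) (hfQ : ∀ x < lam, (x ∈ QM ↔ f x ∈ QN))
    (hfE : ∀ x < lam, ∀ y < lam, (EM x y ↔ EN (f x) (f y)))
    (hfF : ∀ x ∈ QM, ∀ y ∈ PM, f (FM x y) = FN (f x) (f y))
    -- the club `E*` of `λ`
    (Estar : Set Ordinal)
    (hEstar : Estar = {δ | δ < lam ∧ Order.IsSuccLimit δ ∧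
      (∀ β < δ, f β < δ) ∧ (∀ β < lam, f β < δ → β < δ) ∧
      (∀ x < δ, ∀ y < δ, x ∈ QM → y ∈ PM → FM x y < δ) ∧
      (∀ x < δ, ∀ y < δ, x ∈ QN → y ∈ PN → FN x y < δ)})
    (hθE : θ.ord ∈ Estar)
    -- `C ⊆ E* ∩ θ` is a club of `θ`
    (C : Set Ordinal) (hCE : C ⊆ Estar ∩ Set.Iio θ.ord)
    (hCclosed : ∀ α < θ.ord, α ≠ 0 → sSup (C ∩ Set.Iio α) = α → α ∈ C)
    (hCunbdd : ∀ α < θ.ord, ∃ β ∈ C, α < β)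
    (a : Ordinal) (ha : a ∈ PM) :
    ∀ α < θ.ord, ∀ b₁ b₂ : Ordinal,
      IsLeast {β | β ∈ C ∧ α < β ∧
        ∀ β₁ ∈ QM, β₁ < β → FM β₁ a < θ.ord → FM β₁ a < β} b₁ →
      IsLeast {β | β ∈ C ∧ α < β ∧
        ∀ β₁ ∈ QN, β₁ < β → FN β₁ (f a) < θ.ord → FN β₁ (f a) < β} b₂ →
      b₁ ≤ b₂ :=
  stmt4_general θ lam PM QM FM PN QN FN hPQM hFQM f hfQ hfF Estar hEstar hθE C hCE a ha
end
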